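/- arXiv:2312.08489 — 2 statements merged into one kernel-verified Lean document; each statement's English description precedes it below -/
import Mathlib

section
/- Let T be a DFS tree of a connected graph G rooted at r, and X a set of failed vertices with r ∉ X. The number of internal components of T \ X is at most |X|. -/
/-- `a` is an ancestor of `b` with respect to the parent function `p`
(a vertex is an ancestor of itself). -/
def IsAnc {V : Type*} (p : V → V) (a b : V) : Prop :=
  Relation.ReflTransGen (fun x y => p x = y) b a

/-- A DFS (depth-first search) tree of a graph `G`, rooted at `r`, given by a parent
function, DFS (preorder) numbers `num` and descendant counts `nd`.  The field
`dfs_prop` is the defining property of depth-first search: every neighbor of a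
vertex `u` that is discovered after `u` is discovered inside the subtree of `u`. -/
structure DFSTree {V : Type*} [Fintype V] (G : SimpleGraph V) (r : V) where
  parent : V → V
  num : V → ℕ
  nd : V → ℕ
  parent_root : parent r = r
  num_inj : Function.Injective num
  num_lt_card : ∀ v, num v < Fintype.card V
  num_root : num r = 0
  parent_adj : ∀ v, v ≠ r → G.Adj (parent v) v
  parent_num : ∀ v, v ≠ r → num (parent v) < num v
  reach_root : ∀ v, IsAnc parent r v
  nd_def : ∀ v, Set.ncard {u | IsAnc parent v u} = nd v
  subtree_interval : ∀ u v, IsAnc parent u v ↔ (num u ≤ num v ∧ num v < num u + nd u)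
  dfs_prop : ∀ u w, G.Adj u w → num u < num w → num w < num u + nd u

/-- The graph `G` with the vertices of `X` deleted (kept as isolated vertices). -/
def delVerts {V : Type*} (G : SimpleGraph V) (X : Set V) : SimpleGraph V :=
  SimpleGraph.fromRel (fun x y => G.Adj x y ∧ x ∉ X ∧ y ∉ X)

/-- The tree `T`, regarded as a graph (edges between a vertex and its parent). -/
def treeGraph {V : Type*} (p : V → V) : SimpleGraph V :=
  SimpleGraph.fromRel (fun x y => p x = y)

/-- `C` is a connected component of `H \ X`. -/
def IsCompOf {V : Type*} (H : SimpleGraph V) (X : Set V) (C : Set V) : Prop :=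
  ∃ v, v ∉ X ∧ C = {u | (delVerts H X).Reachable u v}

/-- `rc` is the root of the component `C`: a member that is a `p`-ancestor of all of `C`. -/
def IsRootOf {V : Type*} (p : V → V) (C : Set V) (rc : V) : Prop :=
  rc ∈ C ∧ ∀ u ∈ C, IsAnc p rc u

/-- A component `C` of `T \ X` is internal if some failed vertex of `X` is a
descendant of a vertex of `C`; otherwise it is a hanging subtree. -/
def IsInternal {V : Type*} (p : V → V) (X C : Set V) : Prop :=
  ∃ f ∈ X, ∃ c ∈ C, IsAnc p c f

/-- `C'` is an ancestor of `C` (some vertex of `C` is a descendant of some vertex of `C'`). -/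
def CompAnc {V : Type*} (p : V → V) (C' C : Set V) : Prop :=
  ∃ a ∈ C', ∃ b ∈ C, IsAnc p a b

/-- `f` is a boundary vertex of the component `C`: a failed vertex whose parent lies in `C`. -/
def IsBoundary {V : Type*} (p : V → V) (X C : Set V) (f : V) : Prop :=
  f ∈ X ∧ p f ∈ C


-- auxiliary lemmas

lemma adj_notin {V : Type*} (H : SimpleGraph V) (X : Set V) {x y : V}
    (h : (delVerts H X).Adj x y) : x ∉ X ∧ y ∉ X := by
  rcases h.2 with ⟨_,_,h⟩|⟨_,h⟩ <;> tauto

lemma comp_disj {V : Type*} {H : SimpleGraph V} {X C : Set V}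
    (hC : IsCompOf H X C) {u : V} (hu : u ∈ C) : u ∉ X := by
  obtain ⟨v, hv, rfl⟩ := hC
  obtain ⟨w⟩ := hu
  cases w with
  | nil => exact hv
  | cons h _ => exact (adj_notin H X h).1

lemma boundary_exists {V : Type*} {p : V → V} {X C : Set V}
    (hC : IsCompOf (treeGraph p) X C) {f c : V} (hf : f ∈ X) (hc : c ∈ C)
    (hanc : IsAnc p c f) : ∃ g, g ∈ X ∧ p g ∈ C := by
  have key : ∀ u, Relation.ReflTransGen (fun x y => p x = y) u c →
      (u ∈ C ∨ ∃ g, g ∈ X ∧ p g ∈ C) := by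
    intro u hu
    induction hu using Relation.ReflTransGen.head_induction_on with
    | refl => exact Or.inl hc
    | head h _ ih =>
      rename_i a b _
      rcases ih with hb | hg
      · by_cases hax : a ∈ X
        · exact Or.inr ⟨a, hax, h ▸ hb⟩
        · by_cases hab : a = b
          · exact Or.inl (hab ▸ hb)
          · have hbx : b ∉ X := comp_disj hC hb
            have hadj : (delVerts (treeGraph p) X).Adj a b := by
              refine ⟨hab, Or.inl ⟨⟨hab, Or.inl h⟩, hax, hbx⟩⟩
            obtain ⟨v, hv, rfl⟩ := hC
            exact Or.inl (hadj.reachable.trans hb)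
      · exact Or.inr hg
  rcases key f hanc with h | h
  · exact absurd hf (comp_disj hC h)
  · exact h

theorem internal_components_card_le' {V : Type*} [Fintype V] [Nonempty V]
    (p : V → V) (X : Set V) :
    Set.ncard {C : Set V | IsCompOf (treeGraph p) X C ∧ (∃ f ∈ X, ∃ c ∈ C, IsAnc p c f)}
      ≤ X.ncard := by
  classical
  set S := {C : Set V | IsCompOf (treeGraph p) X C ∧ (∃ f ∈ X, ∃ c ∈ C, IsAnc p c f)}
  have hex : ∀ C ∈ S, ∃ g, g ∈ X ∧ p g ∈ C := by
    rintro C ⟨hC, f, hf, c, hc, hanc⟩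
    exact boundary_exists hC hf hc hanc
  choose! F hF1 hF2 using hex
  apply Set.ncard_le_ncard_of_injOn F (fun C hC => hF1 C hC) ?_ X.toFinite
  intro C hC C' hC' hFF
  obtain ⟨v, hv, rfl⟩ := hC.1
  obtain ⟨v', hv', rfl⟩ := hC'.1
  have h1 := hF2 _ hC
  have h2 : (delVerts (treeGraph p) X).Reachable
      (p (F {u | (delVerts (treeGraph p) X).Reachable u v})) v' := by
    rw [hFF] at h1 ⊢
    exact hF2 _ hC'
  have hvv' : (delVerts (treeGraph p) X).Reachable v v' := h1.symm.trans h2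
  ext u
  exact ⟨fun h => h.trans hvv', fun h => h.trans hvv'.symm⟩

/-- The number of internal components of `T \ X` is at most `|X|`. -/
theorem internal_components_card_le {V : Type*} [Fintype V] [DecidableEq V]
    (G : SimpleGraph V) (hG : G.Connected) (r : V) (T : DFSTree G r)
    (X : Set V) (hr : r ∉ X) :
    Set.ncard {C : Set V | IsCompOf (treeGraph T.parent) X C ∧ IsInternal T.parent X C}
      ≤ X.ncard := by
  have : Nonempty V := ⟨r⟩
  exact internal_components_card_le' T.parent X
end

section
/- Let G be a connected undirected graph, T a DFS tree of G \ D̂ rooted at r, and D a set of failed vertices with r ∉ D. Define the connectivity graph M on vertex set (D̂ \ D) ∪ {r_C : C internal component of T \ (D \ D̂)} with the six edge types: (1) r_{C1} ~ r_{C2} if a back-edge joins internal components C1, C2; (2) for a hanging subtree H with back-edges to internal components C1,...,Ck where Ck is an ancestor of all others, edges r_{Ck} ~ r_{Ci} for i < k; (3) u1 ~ u2 for u1, u2 ∈ D̂ \ D adjacent in G; (4) r_C ~ u if an edge of G joins u ∈ D̂ \ D to a vertex of internal component C; (5) u1 ~ u2 if both u1, u2 ∈ D̂ \ D are adjacent in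 G to vertices of a common hanging subtree H; (6) r_C ~ u if some hanging subtree H has a back-edge to internal component C and an edge of G to u ∈ D̂ \ D. Then for any S, S' each being an internal component of T \ (D \ D̂) or a vertex of D̂ \ D, S and S' are connected in G \ D if and only if their representative vertices are connected in M. -/
/-- A DFS tree of the subgraph of `G` induced on the vertex set `S`, rooted at `r`:
parent function, DFS (preorder) numbers `num`, descendant counts `nd`.  `dfs_prop` is the
defining property of depth-first search. -/
structure DFSTreeOn {V : Type*} [Fintype V] (G : SimpleGraph V) (S : Set V) (r : V) where
  parent : V → V
  num : V → ℕ
  nd : V → ℕ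
  root_mem : r ∈ S
  parent_root : parent r = r
  parent_mem : ∀ v ∈ S, parent v ∈ S
  num_inj : Function.Injective num
  parent_adj : ∀ v ∈ S, v ≠ r → G.Adj (parent v) v
  parent_num : ∀ v ∈ S, v ≠ r → num (parent v) < num v
  reach_root : ∀ v ∈ S, IsAnc parent r v
  nd_def : ∀ v ∈ S, Set.ncard {u | u ∈ S ∧ IsAnc parent v u} = nd v
  subtree_interval : ∀ u ∈ S, ∀ v ∈ S,
    (IsAnc parent u v ↔ (num u ≤ num v ∧ num v < num u + nd u))
  dfs_prop : ∀ u ∈ S, ∀ w ∈ S, G.Adj u w → num u < num w → num w < num u + nd u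

/-- The tree with parent function `p` on the vertex set `S`, regarded as a graph. -/
def treeGraphOn {V : Type*} (p : V → V) (S : Set V) : SimpleGraph V :=
  SimpleGraph.fromRel (fun x y => x ∈ S ∧ y ∈ S ∧ p x = y)

/-- `C` is a connected component of `T \ X`, for the tree on vertex set `S`. -/
def IsCompOn {V : Type*} (p : V → V) (S X C : Set V) : Prop :=
  ∃ v ∈ S, v ∉ X ∧ C = {u | (delVerts (treeGraphOn p S) X).Reachable u v}

/-- `C` is an internal component of `T \ X`. -/
def IsIntC {V : Type*} (p : V → V) (S X C : Set V) : Prop :=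
  IsCompOn p S X C ∧ IsInternal p X C

/-- `C` is a hanging subtree of `T \ X`. -/
def IsHang {V : Type*} (p : V → V) (S X C : Set V) : Prop :=
  IsCompOn p S X C ∧ ¬ IsInternal p X C

/-- There is a back-edge (non-tree edge of `G`) with one end in `A` and the other in `B`. -/
def BackE {V : Type*} (G : SimpleGraph V) (p : V → V) (A B : Set V) : Prop :=
  ∃ x ∈ A, ∃ y ∈ B, G.Adj x y ∧ p x ≠ y ∧ p y ≠ x

/-- Some edge of `G` joins the vertex `u` to the set `A`. -/
def EdgeToSet {V : Type*} (G : SimpleGraph V) (u : V) (A : Set V) : Prop :=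
  ∃ x ∈ A, G.Adj u x

/-- The edge relation of the connectivity graph `M`, with the six edge types:
(1) a back-edge between two internal components; (2) a hanging subtree with back-edges to
internal components `C₁, …, C_k`, `C_k` most ancestral, gives edges `(r_{C_k}, r_{C_i})`;
(3) an edge of `G` between two vertices of `U = D̂ \ D`; (4) an edge of `G` between a
vertex of `U` and an internal component; (5) two vertices of `U` joined to a common
hanging subtree; (6) a vertex of `U` and an internal component joined to a common hanging
subtree. -/
def MRel {V : Type*} (G : SimpleGraph V) (p : V → V) (S X U : Set V) (a b : V) : Prop :=
  (∃ C₁ C₂, IsIntC p S X C₁ ∧ IsIntC p S X C₂ ∧ IsRootOf p C₁ a ∧ IsRootOf p C₂ b ∧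
    BackE G p C₁ C₂) ∨
  (∃ H Ck Ci, IsHang p S X H ∧ IsIntC p S X Ck ∧ IsIntC p S X Ci ∧
    IsRootOf p Ck a ∧ IsRootOf p Ci b ∧ BackE G p H Ck ∧ BackE G p H Ci ∧
    (∀ C', IsIntC p S X C' → BackE G p H C' → CompAnc p Ck C')) ∨
  (a ∈ U ∧ b ∈ U ∧ G.Adj a b) ∨
  (∃ C, IsIntC p S X C ∧ IsRootOf p C a ∧ b ∈ U ∧ EdgeToSet G b C) ∨
  (a ∈ U ∧ b ∈ U ∧ ∃ H, IsHang p S X H ∧ EdgeToSet G a H ∧ EdgeToSet G b H) ∨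
  (∃ C H, IsIntC p S X C ∧ IsRootOf p C a ∧ IsHang p S X H ∧ BackE G p C H ∧
    b ∈ U ∧ EdgeToSet G b H)

/-- The connectivity graph `M`. -/
def MGraph {V : Type*} (G : SimpleGraph V) (p : V → V) (S X U : Set V) : SimpleGraph V :=
  SimpleGraph.fromRel (MRel G p S X U)

/-- `a` is the representative vertex in `M` of `A`, where `A` is either an internal
component of `T \ X` (represented by its root) or a singleton of a vertex of `U`. -/
def IsRep {V : Type*} (p : V → V) (S X U : Set V) (A : Set V) (a : V) : Prop :=
  (IsIntC p S X A ∧ IsRootOf p A a) ∨ (a ∈ U ∧ A = {a})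

/-!
A walk in `G \ D` is followed in `M` piece by piece: every vertex outside `D` lies in `D̂ \ D`, in
an internal component, or in a hanging subtree. By the DFS property every edge from a hanging
subtree `H` to another vertex of `T` goes up to an ancestor of the failed parent of the root of
`H`, so it ends in an internal component; all the vertices of `M` reached in this way from `H` are
connected in `M` through the most ancestral internal component `C_k` attached to `H` (edges of
types 2, 5 and 6). Conversely every edge of `M` is realised by a path in `G \ D`, since the
components are connected inside the tree.
-/

open Relation

theorem Relation.ReflTransGen.total_of_le_graph {α : Type*} {R₁ R₂ : α → α → Prop}
    (f : α → α) (h₁ : ∀ x y, R₁ x y → f x = y) (h₂ : ∀ x y, R₂ x y → f x = y) {b u u' : α}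
    (hu : ReflTransGen R₁ b u) (hu' : ReflTransGen R₂ b u') :
    ReflTransGen R₂ u u' ∨ ReflTransGen R₁ u' u := by
  induction hu with
  | refl => exact Or.inl hu'
  | tail _ hmu ih =>
    rcases ih with h | h
    · rcases h.cases_head with rfl | ⟨c, hc, hcu'⟩
      · exact Or.inr (ReflTransGen.single hmu)
      · exact Or.inl ((h₂ _ _ hc).symm.trans (h₁ _ _ hmu) ▸ hcu')
    · exact Or.inr (h.tail hmu)

theorem SimpleGraph.Reachable.exists_related {V W : Type*} {G : SimpleGraph V}
    {M : SimpleGraph W} (R : V → W → Prop)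
    (step : ∀ ⦃x y m⦄, G.Adj x y → R x m → ∃ m', R y m' ∧ M.Reachable m m')
    {x y : V} {m : W} (h : G.Reachable x y) (hx : R x m) :
    ∃ m', R y m' ∧ M.Reachable m m' := by
  rw [SimpleGraph.reachable_iff_reflTransGen] at h
  induction h with
  | refl => exact ⟨m, hx, .refl _⟩
  | tail _ hadj ih =>
    obtain ⟨m₁, h₁, hm₁⟩ := ih
    obtain ⟨m₂, h₂, hm₂⟩ := step hadj h₁
    exact ⟨m₂, h₂, hm₁.trans hm₂⟩

theorem SimpleGraph.fromRel_reachable_of_rel {V : Type*} {r : V → V → Prop} {a b : V}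
    (h : r a b) : (SimpleGraph.fromRel r).Reachable a b := by
  by_cases hab : a = b
  · exact hab ▸ .refl _
  · exact ((SimpleGraph.fromRel_adj _ _ _).mpr ⟨hab, Or.inl h⟩).reachable

theorem SimpleGraph.Reachable.of_fromRel {V : Type*} {r : V → V → Prop} {P : SimpleGraph V}
    (hr : ∀ a b, r a b → P.Reachable a b) {a b : V} (h : (SimpleGraph.fromRel r).Reachable a b) :
    P.Reachable a b := by
  rw [SimpleGraph.reachable_iff_reflTransGen] at h
  induction h with
  | refl => exact .refl _
  | tail _ hadj ih =>
    rcases ((SimpleGraph.fromRel_adj _ _ _).mp hadj).2 with h | h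
    exacts [ih.trans (hr _ _ h), ih.trans (hr _ _ h).symm]

namespace IsAnc

variable {V : Type*} {p : V → V} {a b c : V}

theorem total (hac : IsAnc p a c) (hbc : IsAnc p b c) : IsAnc p a b ∨ IsAnc p b a :=
  (ReflTransGen.total_of_right_unique (fun _ _ _ h₁ h₂ => h₁.symm.trans h₂) hac hbc).symm

theorem eq_of_parent_eq (hb : p b = b) (h : IsAnc p a b) : a = b := by
  induction h with
  | refl => rfl
  | tail _ hstep ih => rw [← hstep, ih, hb]

theorem parent_of_ne (h : IsAnc p a b) (hne : a ≠ b) : IsAnc p a (p b) := by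
  rcases h.cases_head with rfl | ⟨c, hc, hca⟩
  · exact absurd rfl hne
  · exact hc ▸ hca

end IsAnc

section Deletion

variable {V : Type*} {p : V → V} {S X : Set V} {x y : V}

theorem delVerts_adj {G : SimpleGraph V} :
    (delVerts G X).Adj x y ↔ G.Adj x y ∧ x ∉ X ∧ y ∉ X := by
  rw [delVerts, SimpleGraph.fromRel_adj]
  constructor
  · rintro ⟨-, h | ⟨h, hy, hx⟩⟩
    exacts [h, ⟨h.symm, hx, hy⟩]
  · exact fun h => ⟨h.1.ne, Or.inl h⟩

theorem delVerts_treeGraphOn_adj :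
    (delVerts (treeGraphOn p S) X).Adj x y ↔
      x ≠ y ∧ x ∈ S ∧ y ∈ S ∧ x ∉ X ∧ y ∉ X ∧ (p x = y ∨ p y = x) := by
  rw [delVerts_adj, treeGraphOn, SimpleGraph.fromRel_adj]
  tauto

end Deletion

def UpStep {V : Type*} (p : V → V) (S X : Set V) (x y : V) : Prop :=
  p x = y ∧ x ∈ S ∧ y ∈ S ∧ x ∉ X ∧ y ∉ X

/-- Every vertex of a component of `T \ X` climbs to the same top, which is therefore the root of
the component. -/
def IsClimbTop {V : Type*} (p : V → V) (S X : Set V) (t v : V) : Prop :=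
  ReflTransGen (UpStep p S X) v t ∧ (p t ∈ X ∨ p t = t)

section UpPaths

variable {V : Type*} {p : V → V} {S X : Set V} {t v x y : V}

theorem isAnc_of_upPath (h : ReflTransGen (UpStep p S X) v t) : IsAnc p t v :=
  ReflTransGen.mono (r := UpStep p S X) (fun _ _ hs => hs.1) _ _ h

theorem reachable_of_upPath (h : ReflTransGen (UpStep p S X) v t) :
    (delVerts (treeGraphOn p S) X).Reachable v t := by
  induction h with
  | refl => exact .refl _
  | @tail x y _ hs ih =>
    by_cases hxy : x = y
    · exact hxy ▸ ih
    · obtain ⟨hp, hx, hy, hxX, hyX⟩ := hs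
      exact ih.trans
        (delVerts_treeGraphOn_adj.mpr ⟨hxy, hx, hy, hxX, hyX, Or.inl hp⟩).reachable

namespace IsClimbTop

theorem of_adj (h : IsClimbTop p S X t x) (hxy : (delVerts (treeGraphOn p S) X).Adj x y) :
    IsClimbTop p S X t y := by
  obtain ⟨hne, hx, hy, hxX, hyX, hxy | hyx⟩ := delVerts_treeGraphOn_adj.mp hxy
  · rcases h.1.cases_head with rfl | ⟨c, hc, hct⟩
    · rcases h.2 with ht | ht
      · exact absurd (hxy ▸ ht) hyX
      · exact absurd (hxy.symm.trans ht).symm hne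
    · exact ⟨hc.1.symm.trans hxy ▸ hct, h.2⟩
  · exact ⟨.head ⟨hyx, hy, hx, hyX, hxX⟩ h.1, h.2⟩

theorem of_reachable (h : IsClimbTop p S X t x)
    (hxy : (delVerts (treeGraphOn p S) X).Reachable x y) : IsClimbTop p S X t y := by
  rw [SimpleGraph.reachable_iff_reflTransGen] at hxy
  induction hxy with
  | refl => exact h
  | tail _ hadj ih => exact ih.of_adj hadj

end IsClimbTop

end UpPaths

namespace IsCompOn

variable {V : Type*} {p : V → V} {S X C C' : Set V} {u w : V}

theorem mem (hC : IsCompOn p S X C) (hu : u ∈ C) : u ∈ S ∧ u ∉ X := by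
  obtain ⟨v, hv, hvX, rfl⟩ := hC
  rcases (SimpleGraph.reachable_iff_reflTransGen _ _).mp hu |>.cases_head with rfl | ⟨c, hc, -⟩
  · exact ⟨hv, hvX⟩
  · obtain ⟨-, hu, -, huX, -⟩ := delVerts_treeGraphOn_adj.mp hc
    exact ⟨hu, huX⟩

theorem eq_of_mem (hC : IsCompOn p S X C) (hC' : IsCompOn p S X C') (hw : w ∈ C)
    (hw' : w ∈ C') : C = C' := by
  obtain ⟨v, -, -, rfl⟩ := hC
  obtain ⟨v', -, -, rfl⟩ := hC'
  ext u
  exact ⟨fun hu => hu.trans (hw.symm.trans hw'), fun hu => hu.trans (hw'.symm.trans hw)⟩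

theorem mem_of_reachable (hC : IsCompOn p S X C) (hu : u ∈ C)
    (h : (delVerts (treeGraphOn p S) X).Reachable w u) : w ∈ C := by
  obtain ⟨v, -, -, rfl⟩ := hC
  exact h.trans hu

theorem backE_of_adj {G : SimpleGraph V} {B : Set V} {x y : V} (hC : IsCompOn p S X C)
    (hx : x ∈ C) (hyB : y ∈ B) (hy : y ∈ S ∧ y ∉ X) (hyC : y ∉ C) (hxy : G.Adj x y) :
    BackE G p C B := by
  obtain ⟨hxS, hxX⟩ := hC.mem hx
  have hne : x ≠ y := fun h => hyC (h ▸ hx)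
  have tree_edge (h : p x = y ∨ p y = x) : False := hyC <| hC.mem_of_reachable hx
    (delVerts_treeGraphOn_adj.mpr ⟨hne, hxS, hy.1, hxX, hy.2, h⟩).reachable.symm
  exact ⟨x, hx, y, hyB, hxy, fun h => tree_edge (Or.inl h), fun h => tree_edge (Or.inr h)⟩

end IsCompOn

theorem exists_isCompOn_mem {V : Type*} {p : V → V} {S X : Set V} {y : V} (hy : y ∈ S)
    (hyX : y ∉ X) : ∃ C, IsCompOn p S X C ∧ y ∈ C :=
  ⟨_, ⟨y, hy, hyX, rfl⟩, .refl _⟩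

theorem BackE.symm {V : Type*} {G : SimpleGraph V} {p : V → V} {A B : Set V}
    (h : BackE G p A B) : BackE G p B A := by
  obtain ⟨x, hx, y, hy, hxy, h₁, h₂⟩ := h
  exact ⟨y, hy, x, hx, hxy.symm, h₂, h₁⟩

namespace DFSTreeOn

variable {V : Type*} [Fintype V] {G : SimpleGraph V} {S : Set V} {r : V}
  (T : DFSTreeOn G S r) {X : Set V}

theorem mem_and_num_le_of_isAnc {a b : V} (hb : b ∈ S) (h : IsAnc T.parent a b) :
    a ∈ S ∧ T.num a ≤ T.num b := by
  induction h using ReflTransGen.head_induction_on with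
  | refl => exact ⟨hb, le_rfl⟩
  | @head x c hxc _ ih =>
    obtain ⟨ha, hca⟩ := ih (hxc ▸ T.parent_mem x hb)
    refine ⟨ha, hca.trans ?_⟩
    by_cases hxr : x = r
    · rw [← hxc, hxr, T.parent_root]
    · exact (hxc ▸ T.parent_num x hb hxr).le

theorem isAnc_antisymm {a b : V} (hb : b ∈ S) (hab : IsAnc T.parent a b)
    (hba : IsAnc T.parent b a) : a = b :=
  have ⟨ha, hab⟩ := T.mem_and_num_le_of_isAnc hb hab
  T.num_inj (hab.antisymm (T.mem_and_num_le_of_isAnc ha hba).2)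

theorem eq_of_isRootOf {C : Set V} (hC : IsCompOn T.parent S X C) {r₁ r₂ : V}
    (h₁ : IsRootOf T.parent C r₁) (h₂ : IsRootOf T.parent C r₂) : r₁ = r₂ :=
  T.isAnc_antisymm (hC.mem h₂.1).1 (h₁.2 r₂ h₂.1) (h₂.2 r₁ h₁.1)

theorem isAnc_or_isAnc_of_adj {x y : V} (hx : x ∈ S) (hy : y ∈ S) (hxy : G.Adj x y) :
    IsAnc T.parent x y ∨ IsAnc T.parent y x := by
  rcases (T.num_inj.ne hxy.ne).lt_or_gt with h | h
  · exact Or.inl <| (T.subtree_interval x hx y hy).mpr ⟨h.le, T.dfs_prop x hx y hy hxy h⟩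
  · exact Or.inr <| (T.subtree_interval y hy x hx).mpr ⟨h.le, T.dfs_prop y hy x hx hxy.symm h⟩

theorem exists_isClimbTop {v : V} (hv : v ∈ S) (hvX : v ∉ X) :
    ∃ t, IsClimbTop T.parent S X t v := by
  induction hn : T.num v using Nat.strong_induction_on generalizing v with
  | _ n ih =>
  by_cases hstop : T.parent v ∈ X ∨ T.parent v = v
  · exact ⟨v, .refl, hstop⟩
  push Not at hstop
  have hvr : v ≠ r := fun h => hstop.2 (h ▸ T.parent_root)
  have hp := T.parent_mem v hv
  obtain ⟨t, hpath, ht⟩ := ih _ (hn ▸ T.parent_num v hv hvr) hp hstop.1 rfl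
  exact ⟨t, .head ⟨rfl, hv, hp, hvX, hstop.1⟩ hpath, ht⟩

theorem exists_isRootOf {C : Set V} (hC : IsCompOn T.parent S X C) :
    ∃ rc, IsRootOf T.parent C rc ∧ ∀ u ∈ C, IsClimbTop T.parent S X rc u := by
  obtain ⟨v, hv, hvX, rfl⟩ := hC
  obtain ⟨t, ht⟩ := T.exists_isClimbTop hv hvX
  have htop (u : V) (hu : (delVerts (treeGraphOn T.parent S) X).Reachable u v) :
      IsClimbTop T.parent S X t u :=
    ht.of_reachable hu.symm
  exact ⟨t, ⟨(reachable_of_upPath ht.1).symm, fun u hu => isAnc_of_upPath (htop u hu).1⟩, htop⟩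

theorem mem_of_isAnc_of_isHang {H : Set V} (hH : IsHang T.parent S X H) {x y : V}
    (hx : x ∈ H) (hy : y ∈ S) (hxy : IsAnc T.parent x y) : y ∈ H := by
  induction hxy using ReflTransGen.head_induction_on with
  | refl => exact hx
  | @head y c hyc hcx ih =>
    have hcH := ih (hyc ▸ T.parent_mem y hy)
    have hyX : y ∉ X := fun h => hH.2 ⟨y, h, x, hx, hcx.head hyc⟩
    by_cases hne : y = c
    · exact hne ▸ hcH
    obtain ⟨hcS, hcX⟩ := hH.1.mem hcH
    exact hH.1.mem_of_reachable hcH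
      (delVerts_treeGraphOn_adj.mpr ⟨hne, hy, hcS, hyX, hcX, Or.inl hyc⟩).reachable

theorem isAnc_parent_of_adj_isHang {H : Set V} (hH : IsHang T.parent S X H) {rH x y : V}
    (hrH : rH ∈ H) (htop : ∀ u ∈ H, IsClimbTop T.parent S X rH u) (hx : x ∈ H) (hy : y ∈ S)
    (hyH : y ∉ H) (hxy : G.Adj x y) :
    T.parent rH ∈ X ∧ IsAnc T.parent y (T.parent rH) := by
  rcases T.isAnc_or_isAnc_of_adj (hH.1.mem hx).1 hy hxy with hxy | hyx
  · exact absurd (T.mem_of_isAnc_of_isHang hH hx hy hxy) hyH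
  rcases ReflTransGen.total_of_le_graph T.parent (fun _ _ hs => hs.1) (fun _ _ hs => hs)
    (htop x hx).1 hyx with hyrH | hup
  · have hne : y ≠ rH := fun h => hyH (h ▸ hrH)
    refine ⟨?_, IsAnc.parent_of_ne hyrH hne⟩
    rcases (htop x hx).2 with h | h
    · exact h
    · exact absurd (IsAnc.eq_of_parent_eq h hyrH) hne
  · exact absurd (hH.1.mem_of_reachable hrH (reachable_of_upPath hup)) hyH

theorem isInternal_of_adj_isHang {H C : Set V} (hH : IsHang T.parent S X H)
    (hC : IsCompOn T.parent S X C) {x y : V} (hx : x ∈ H) (hyC : y ∈ C) (hyH : y ∉ H)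
    (hxy : G.Adj x y) : IsInternal T.parent X C := by
  obtain ⟨rH, hroot, htop⟩ := T.exists_isRootOf hH.1
  obtain ⟨hp, hanc⟩ := T.isAnc_parent_of_adj_isHang hH hroot.1 htop hx (hC.mem hyC).1 hyH hxy
  exact ⟨_, hp, y, hyC, hanc⟩

/-- The component `C_k` of edge type 2. -/
theorem exists_highest_backE {H : Set V} (hH : IsHang T.parent S X H)
    (hne : ∃ C, IsIntC T.parent S X C ∧ BackE G T.parent H C) :
    ∃ Ck, IsIntC T.parent S X Ck ∧ BackE G T.parent H Ck ∧
      ∀ C, IsIntC T.parent S X C → BackE G T.parent H C → CompAnc T.parent Ck C := by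
  obtain ⟨rH, hroot, htop⟩ := T.exists_isRootOf hH.1
  -- the lowest-numbered end `ys` of an edge leaving `H` is an ancestor of all the others, since
  -- they all lie above the parent of `rH`
  set Y : Set V := {y | y ∈ S ∧ y ∉ X ∧ y ∉ H ∧ ∃ x ∈ H, G.Adj x y}
  have exists_mem_Y {C : Set V} (hC : IsIntC T.parent S X C) (hB : BackE G T.parent H C) :
      ∃ y ∈ Y, y ∈ C := by
    obtain ⟨x, hx, y, hy, hxy, -⟩ := hB
    have hyH : y ∉ H := fun h => hH.2 (hH.1.eq_of_mem hC.1 h hy ▸ hC.2)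
    exact ⟨y, ⟨(hC.1.mem hy).1, (hC.1.mem hy).2, hyH, x, hx, hxy⟩, hy⟩
  have isAnc_of_mem_Y : ∀ y ∈ Y, IsAnc T.parent y (T.parent rH) := by
    rintro y ⟨hyS, -, hyH, x, hx, hxy⟩
    exact (T.isAnc_parent_of_adj_isHang hH hroot.1 htop hx hyS hyH hxy).2
  obtain ⟨C₀, hC₀, hB₀⟩ := hne
  obtain ⟨y₀, hy₀, -⟩ := exists_mem_Y hC₀ hB₀
  obtain ⟨ys, hys, hmin⟩ := Set.exists_min_image Y T.num (Set.toFinite Y) ⟨y₀, hy₀⟩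
  have ⟨hysS, hysX, hysH, xs, hxs, hxys⟩ := hys
  obtain ⟨Ck, hCk, hysCk⟩ := exists_isCompOn_mem (p := T.parent) hysS hysX
  refine ⟨Ck, ⟨hCk, T.isInternal_of_adj_isHang hH hCk hxs hysCk hysH hxys⟩,
    hH.1.backE_of_adj hxs hysCk ⟨hysS, hysX⟩ hysH hxys, fun C hC hB => ?_⟩
  obtain ⟨y, hy, hyC⟩ := exists_mem_Y hC hB
  refine ⟨ys, hysCk, y, hyC, ?_⟩
  rcases (isAnc_of_mem_Y ys hys).total (isAnc_of_mem_Y y hy) with h | h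
  · exact h
  · have hyys := (T.mem_and_num_le_of_isAnc hysS h).2
    exact T.num_inj (hyys.antisymm (hmin y hy)) ▸ .refl
theorem delVerts_treeGraphOn_le {D : Set V} (hD : D ∩ S ⊆ X) :
    delVerts (treeGraphOn T.parent S) X ≤ delVerts G D := by
  intro x y hxy
  obtain ⟨hne, hx, hy, hxX, hyX, hp⟩ := delVerts_treeGraphOn_adj.mp hxy
  refine delVerts_adj.mpr ⟨?_, fun h => hxX (hD ⟨h, hx⟩), fun h => hyX (hD ⟨h, hy⟩)⟩
  rcases hp with rfl | rfl
  · exact (T.parent_adj x hx fun h => hne (by rw [h, T.parent_root])).symm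
  · exact T.parent_adj y hy fun h => hne (by rw [h, T.parent_root])

end DFSTreeOn

/-- The vertices of `M` that the hanging subtree `H` leads to in one step of `G \ D`. -/
def AttachedTo {V : Type*} (G : SimpleGraph V) (p : V → V) (Dhat D H : Set V) (m : V) : Prop :=
  (∃ C, IsIntC p Dhatᶜ (D \ Dhat) C ∧ IsRootOf p C m ∧ BackE G p H C) ∨
    (m ∈ Dhat \ D ∧ EdgeToSet G m H)

/-- A vertex of a hanging subtree is represented by every vertex of `M` attached to the subtree;
these are all connected in `M`. -/
def IsVertexRep {V : Type*} (G : SimpleGraph V) (p : V → V) (Dhat D : Set V) (x m : V) :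
    Prop :=
  (x ∈ Dhat \ D ∧ m = x) ∨ (∃ C, IsIntC p Dhatᶜ (D \ Dhat) C ∧ x ∈ C ∧ IsRootOf p C m) ∨
    (∃ H, IsHang p Dhatᶜ (D \ Dhat) H ∧ x ∈ H ∧ AttachedTo G p Dhat D H m)

section Representatives

variable {V : Type*} {G : SimpleGraph V} {p : V → V} {Dhat D A : Set V} {a : V}

theorem IsCompOn.not_mem_of_mem {C : Set V} (hC : IsCompOn p Dhatᶜ (D \ Dhat) C) {u : V}
    (hu : u ∈ C) : u ∉ D :=
  fun h => (hC.mem hu).2 ⟨h, (hC.mem hu).1⟩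

theorem IsRep.mem (hA : IsRep p Dhatᶜ (D \ Dhat) (Dhat \ D) A a) : a ∈ A := by
  rcases hA with ⟨-, ha⟩ | ⟨-, rfl⟩
  exacts [ha.1, rfl]

theorem IsRep.isVertexRep (hA : IsRep p Dhatᶜ (D \ Dhat) (Dhat \ D) A a) {x : V} (hx : x ∈ A) :
    IsVertexRep G p Dhat D x a := by
  rcases hA with ⟨hA, ha⟩ | ⟨ha, rfl⟩
  · exact Or.inr (Or.inl ⟨A, hA, hx, ha⟩)
  · obtain rfl : x = a := hx
    exact Or.inl ⟨ha, rfl⟩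

end Representatives

namespace DFSTreeOn

variable {V : Type*} [Fintype V] {G : SimpleGraph V} {Dhat D : Set V} {r : V}
  (T : DFSTreeOn G Dhatᶜ r)

local notation "𝓜" => MGraph G T.parent Dhatᶜ (D \ Dhat) (Dhat \ D)

theorem reachable_of_mem_isCompOn {C : Set V} (hC : IsCompOn T.parent Dhatᶜ (D \ Dhat) C)
    {u w : V} (hu : u ∈ C) (hw : w ∈ C) : (delVerts G D).Reachable u w := by
  obtain ⟨v, -, -, rfl⟩ := hC
  exact (hu.trans hw.symm).mono (T.delVerts_treeGraphOn_le fun _ h => h)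

theorem delVerts_reachable_of_mRel {a b : V}
    (h : MRel G T.parent Dhatᶜ (D \ Dhat) (Dhat \ D) a b) : (delVerts G D).Reachable a b := by
  have edge {x y : V} (hxy : G.Adj x y) (hx : x ∉ D) (hy : y ∉ D) :
      (delVerts G D).Reachable x y :=
    (delVerts_adj.mpr ⟨hxy, hx, hy⟩).reachable
  rcases h with ⟨C₁, C₂, hC₁, hC₂, ha, hb, x, hx, y, hy, hxy, -⟩ |
    ⟨H, Ck, Ci, hH, hCk, hCi, ha, hb, ⟨x₁, hx₁, y₁, hy₁, h₁, -⟩, ⟨x₂, hx₂, y₂, hy₂, h₂, -⟩, -⟩ |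
    ⟨ha, hb, hab⟩ | ⟨C, hC, ha, hb, x, hx, hbx⟩ |
    ⟨ha, hb, H, hH, ⟨x₁, hx₁, h₁⟩, ⟨x₂, hx₂, h₂⟩⟩ |
    ⟨C, H, hC, ha, hH, ⟨x, hx, y, hy, hxy, -⟩, hb, ⟨z, hz, hbz⟩⟩
  · exact ((T.reachable_of_mem_isCompOn hC₁.1 ha.1 hx).trans
      (edge hxy (hC₁.1.not_mem_of_mem hx) (hC₂.1.not_mem_of_mem hy))).trans
      (T.reachable_of_mem_isCompOn hC₂.1 hy hb.1)
  · exact (T.reachable_of_mem_isCompOn hCk.1 ha.1 hy₁).trans <|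
      (edge h₁.symm (hCk.1.not_mem_of_mem hy₁) (hH.1.not_mem_of_mem hx₁)).trans <|
      (T.reachable_of_mem_isCompOn hH.1 hx₁ hx₂).trans <|
      (edge h₂ (hH.1.not_mem_of_mem hx₂) (hCi.1.not_mem_of_mem hy₂)).trans
      (T.reachable_of_mem_isCompOn hCi.1 hy₂ hb.1)
  · exact edge hab ha.2 hb.2
  · exact (T.reachable_of_mem_isCompOn hC.1 ha.1 hx).trans
      (edge hbx.symm (hC.1.not_mem_of_mem hx) hb.2)
  · exact (edge h₁ ha.2 (hH.1.not_mem_of_mem hx₁)).trans <|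
      (T.reachable_of_mem_isCompOn hH.1 hx₁ hx₂).trans
      (edge h₂.symm (hH.1.not_mem_of_mem hx₂) hb.2)
  · exact (T.reachable_of_mem_isCompOn hC.1 ha.1 hx).trans <|
      (edge hxy (hC.1.not_mem_of_mem hx) (hH.1.not_mem_of_mem hy)).trans <|
      (T.reachable_of_mem_isCompOn hH.1 hy hz).trans (edge hbz.symm (hH.1.not_mem_of_mem hz) hb.2)

theorem mGraph_reachable_of_attachedTo {H : Set V} (hH : IsHang T.parent Dhatᶜ (D \ Dhat) H)
    {m m' : V} (hm : AttachedTo G T.parent Dhat D H m)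
    (hm' : AttachedTo G T.parent Dhat D H m') : (𝓜).Reachable m m' := by
  rcases hm with ⟨C, hC, hrC, hB⟩ | ⟨hmU, hmH⟩ <;>
    rcases hm' with ⟨C', hC', hrC', hB'⟩ | ⟨hm'U, hm'H⟩
  · obtain ⟨Ck, hCk, hBk, hmax⟩ := T.exists_highest_backE hH ⟨C, hC, hB⟩
    obtain ⟨rk, hrk, -⟩ := T.exists_isRootOf hCk.1
    exact (SimpleGraph.fromRel_reachable_of_rel
      (.inr <| .inl ⟨H, Ck, C, hH, hCk, hC, hrk, hrC, hBk, hB, hmax⟩)).symm.trans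
      (SimpleGraph.fromRel_reachable_of_rel
      (.inr <| .inl ⟨H, Ck, C', hH, hCk, hC', hrk, hrC', hBk, hB', hmax⟩))
  · exact SimpleGraph.fromRel_reachable_of_rel
      (.inr <| .inr <| .inr <| .inr <| .inr ⟨C, H, hC, hrC, hH, hB.symm, hm'U, hm'H⟩)
  · exact (SimpleGraph.fromRel_reachable_of_rel
      (.inr <| .inr <| .inr <| .inr <| .inr ⟨C', H, hC', hrC', hH, hB'.symm, hmU, hmH⟩)).symm
  · exact SimpleGraph.fromRel_reachable_of_rel
      (.inr <| .inr <| .inr <| .inr <| .inl ⟨hmU, hm'U, H, hH, hmH, hm'H⟩)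

theorem mGraph_reachable_of_adj_mem_diff {x y m : V} (hxy : G.Adj x y) (hy : y ∈ Dhat \ D)
    (hx : IsVertexRep G T.parent Dhat D x m) : (𝓜).Reachable m y := by
  rcases hx with ⟨hxU, rfl⟩ | ⟨C, hC, hxC, hm⟩ | ⟨H, hH, hxH, hm⟩
  · exact SimpleGraph.fromRel_reachable_of_rel (.inr <| .inr <| .inl ⟨hxU, hy, hxy⟩)
  · exact SimpleGraph.fromRel_reachable_of_rel
      (.inr <| .inr <| .inr <| .inl ⟨C, hC, hm, hy, x, hxC, hxy.symm⟩)
  · exact T.mGraph_reachable_of_attachedTo hH hm (.inr ⟨hy, x, hxH, hxy.symm⟩)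

theorem mGraph_reachable_of_adj_mem_isIntC {C : Set V}
    (hC : IsIntC T.parent Dhatᶜ (D \ Dhat) C) {x y m my : V} (hxy : G.Adj x y) (hyC : y ∈ C)
    (hmy : IsRootOf T.parent C my) (hx : IsVertexRep G T.parent Dhat D x m) :
    (𝓜).Reachable m my := by
  rcases hx with ⟨hxU, rfl⟩ | ⟨C', hC', hxC', hm⟩ | ⟨H, hH, hxH, hm⟩
  · exact (SimpleGraph.fromRel_reachable_of_rel
      (.inr <| .inr <| .inr <| .inl ⟨C, hC, hmy, hxU, y, hyC, hxy⟩)).symm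
  · by_cases hyC' : y ∈ C'
    · obtain rfl := hC'.1.eq_of_mem hC.1 hyC' hyC
      exact T.eq_of_isRootOf hC.1 hm hmy ▸ .refl _
    · exact SimpleGraph.fromRel_reachable_of_rel
        (.inl ⟨C', C, hC', hC, hm, hmy, hC'.1.backE_of_adj hxC' hyC (hC.1.mem hyC) hyC' hxy⟩)
  · have hyH : y ∉ H := fun h => hH.2 (hH.1.eq_of_mem hC.1 h hyC ▸ hC.2)
    exact T.mGraph_reachable_of_attachedTo hH hm
      (.inl ⟨C, hC, hmy, hH.1.backE_of_adj hxH hyC (hC.1.mem hyC) hyH hxy⟩)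

theorem attachedTo_of_adj_mem_isHang {H : Set V} (hH : IsHang T.parent Dhatᶜ (D \ Dhat) H)
    {x y m : V} (hxy : G.Adj x y) (hyH : y ∈ H) (hx : IsVertexRep G T.parent Dhat D x m) :
    AttachedTo G T.parent Dhat D H m := by
  rcases hx with ⟨hxU, rfl⟩ | ⟨C, hC, hxC, hm⟩ | ⟨H', hH', hxH', hm⟩
  · exact .inr ⟨hxU, y, hyH, hxy⟩
  · have hyC : y ∉ C := fun h => hH.2 (hC.1.eq_of_mem hH.1 h hyH ▸ hC.2)
    exact .inl ⟨C, hC, hm, (hC.1.backE_of_adj hxC hyH (hH.1.mem hyH) hyC hxy).symm⟩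
  · by_cases hyH' : y ∈ H'
    · exact hH'.1.eq_of_mem hH.1 hyH' hyH ▸ hm
    · exact absurd (T.isInternal_of_adj_isHang hH' hH.1 hxH' hyH hyH' hxy) hH.2

theorem exists_isVertexRep_of_adj {x y m : V} (hxy : (delVerts G D).Adj x y)
    (hx : IsVertexRep G T.parent Dhat D x m) :
    ∃ m', IsVertexRep G T.parent Dhat D y m' ∧ (𝓜).Reachable m m' := by
  obtain ⟨hxy, -, hyD⟩ := delVerts_adj.mp hxy
  by_cases hyDhat : y ∈ Dhat
  · exact ⟨y, .inl ⟨⟨hyDhat, hyD⟩, rfl⟩,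
      T.mGraph_reachable_of_adj_mem_diff hxy ⟨hyDhat, hyD⟩ hx⟩
  obtain ⟨C, hC, hyC⟩ := exists_isCompOn_mem (p := T.parent) (S := Dhatᶜ) (X := D \ Dhat) hyDhat
    fun h => hyD h.1
  by_cases hint : IsInternal T.parent (D \ Dhat) C
  · obtain ⟨my, hmy, -⟩ := T.exists_isRootOf hC
    exact ⟨my, .inr <| .inl ⟨C, ⟨hC, hint⟩, hyC, hmy⟩,
      T.mGraph_reachable_of_adj_mem_isIntC ⟨hC, hint⟩ hxy hyC hmy hx⟩
  · exact ⟨m, .inr <| .inr ⟨C, ⟨hC, hint⟩, hyC,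
      T.attachedTo_of_adj_mem_isHang ⟨hC, hint⟩ hxy hyC hx⟩, .refl _⟩

theorem eq_of_isRep_of_isVertexRep {A : Set V} {a y m : V}
    (hA : IsRep T.parent Dhatᶜ (D \ Dhat) (Dhat \ D) A a) (hy : y ∈ A)
    (hym : IsVertexRep G T.parent Dhat D y m) : m = a := by
  rcases hA with ⟨hA, ha⟩ | ⟨ha, rfl⟩
  · rcases hym with ⟨hyU, -⟩ | ⟨C, hC, hyC, hm⟩ | ⟨H, hH, hyH, -⟩
    · exact absurd hyU.1 (hA.1.mem hy).1
    · exact T.eq_of_isRootOf hA.1 (hC.1.eq_of_mem hA.1 hyC hy ▸ hm) ha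
    · exact absurd (hH.1.eq_of_mem hA.1 hyH hy ▸ hA.2) hH.2
  · obtain rfl : y = a := hy
    rcases hym with ⟨-, rfl⟩ | ⟨C, hC, hyC, -⟩ | ⟨H, hH, hyH, -⟩
    · rfl
    · exact absurd ha.1 (hC.1.mem hyC).1
    · exact absurd ha.1 (hH.1.mem hyH).1

end DFSTreeOn

theorem connectivity_graph_correct_general {V : Type*} [Fintype V]
    (G : SimpleGraph V) (Dhat D : Set V) (r : V)
    (T : DFSTreeOn G Dhatᶜ r)
    (A A' : Set V) (a a' : V)
    (hA : IsRep T.parent Dhatᶜ (D \ Dhat) (Dhat \ D) A a)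
    (hA' : IsRep T.parent Dhatᶜ (D \ Dhat) (Dhat \ D) A' a') :
    (∃ x ∈ A, ∃ y ∈ A', (delVerts G D).Reachable x y) ↔
      (MGraph G T.parent Dhatᶜ (D \ Dhat) (Dhat \ D)).Reachable a a' := by
  constructor
  · rintro ⟨x, hx, y, hy, hxy⟩
    obtain ⟨m, hym, ham⟩ := hxy.exists_related _
      (fun _ _ _ => T.exists_isVertexRep_of_adj) (hA.isVertexRep hx)
    exact T.eq_of_isRep_of_isVertexRep hA' hy hym ▸ ham
  · exact fun h => ⟨a, hA.mem, a', hA'.mem, h.of_fromRel fun _ _ => T.delVerts_reachable_of_mRel⟩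

/-- Correctness of the connectivity graph `M`: for `S`, `S'` each an internal component of
`T \ (D \ D̂)` or a vertex of `D̂ \ D`, they are connected in `G \ D` if and only if their
representative vertices are connected in `M`. -/
theorem connectivity_graph_correct {V : Type*} [Fintype V] [DecidableEq V]
    (G : SimpleGraph V) (Dhat D : Set V) (r : V)
    (hconn : ∀ u ∉ Dhat, ∀ v ∉ Dhat, (delVerts G Dhat).Reachable u v)
    (hr : r ∉ D) (T : DFSTreeOn G Dhatᶜ r)
    (A A' : Set V) (a a' : V)
    (hA : IsRep T.parent Dhatᶜ (D \ Dhat) (Dhat \ D) A a)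
    (hA' : IsRep T.parent Dhatᶜ (D \ Dhat) (Dhat \ D) A' a') :
    (∃ x ∈ A, ∃ y ∈ A', (delVerts G D).Reachable x y) ↔
      (MGraph G T.parent Dhatᶜ (D \ Dhat) (Dhat \ D)).Reachable a a' :=
  connectivity_graph_correct_general G Dhat D r T A A' a a' hA hA'
end
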